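/- arXiv:1201.2499 — 3 statements merged into one kernel-verified Lean document; each statement's English description precedes it below -/
import Mathlib

section
/- Let T be a triangulated category and let X and Y be triangulated subcategories of T. Then the subcategory of extensions X * Y is a triangulated subcategory of T if and only if Y * X ⊆ X * Y. -/
namespace Paper

open CategoryTheory Limits Triangulated Pretriangulated ZeroObject

universe w v u

variable {C : Type u} [Category.{v} C] [HasZeroObject C] [Preadditive C] [HasShift C ℤ]
  [∀ n : ℤ, (shiftFunctor C n).Additive] [Pretriangulated C]

/-- The subcategory of extensions `X * Y`: objects `e` admitting a distinguished triangle
`x ⟶ e ⟶ y ⟶ x⟦1⟧` with `x ∈ X` and `y ∈ Y`. -/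
def star (X Y : Set C) : Set C :=
  {e | ∃ (x y : C) (_ : x ∈ X) (_ : y ∈ Y) (f : x ⟶ e) (g : e ⟶ y) (h : y ⟶ x⟦(1 : ℤ)⟧),
    Triangle.mk f g h ∈ distTriang C}

/-- A (strictly full) triangulated subcategory: a class of objects containing `0`, closed
under isomorphisms, suspension, desuspension and extensions. -/
structure IsTriangulatedSubcat (S : Set C) : Prop where
  zero_mem : (0 : C) ∈ S
  mem_of_iso : ∀ {a b : C}, (a ≅ b) → a ∈ S → b ∈ S
  shift_mem : ∀ {a : C}, a ∈ S → a⟦(1 : ℤ)⟧ ∈ S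
  unshift_mem : ∀ {a : C}, a ∈ S → a⟦(-1 : ℤ)⟧ ∈ S
  ext₂ : ∀ {a e b : C} (f : a ⟶ e) (g : e ⟶ b) (h : b ⟶ a⟦(1 : ℤ)⟧),
    (Triangle.mk f g h ∈ distTriang C) → a ∈ S → b ∈ S → e ∈ S

/-- A thick subcategory: a triangulated subcategory closed under direct summands
(equivalently, retracts). -/
structure IsThickSubcat (S : Set C) extends IsTriangulatedSubcat S : Prop where
  mem_of_retract : ∀ {a s : C}, s ∈ S → (∃ (i : a ⟶ s) (p : s ⟶ a), i ≫ p = 𝟙 a) → a ∈ S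

/-- `(U, V)` is a stable t-structure in the (triangulated sub)category whose class of
objects is `S`: both are triangulated subcategories contained in `S`, `Hom(U, V) = 0`
and `U * V = S`. -/
structure IsStableTStructureIn (S U V : Set C) : Prop where
  subsetU : U ⊆ S
  subsetV : V ⊆ S
  triU : IsTriangulatedSubcat U
  triV : IsTriangulatedSubcat V
  hom_zero : ∀ {u v : C}, u ∈ U → v ∈ V → ∀ f : u ⟶ v, f = 0
  star_eq : star U V = S

lemma IsTriangulatedSubcat.shift_all {S : Set C} (hS : IsTriangulatedSubcat S) (a : C) (n : ℤ)
    (ha : a ∈ S) : a⟦n⟧ ∈ S := by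
  induction n using Int.induction_on with
  | zero => exact hS.mem_of_iso ((shiftFunctorZero C ℤ).app a).symm ha
  | succ i hi =>
      exact hS.mem_of_iso ((shiftFunctorAdd' C (i : ℤ) 1 ((i : ℤ) + 1) rfl).app a).symm
        (hS.shift_mem hi)
  | pred i hi =>
      exact hS.mem_of_iso
        ((shiftFunctorAdd' C (-(i : ℤ)) (-1) (-(i : ℤ) - 1) (by ring)).app a).symm
        (hS.unshift_mem hi)

/-- The Mathlib `Triangulated.Subcategory` associated to a class of objects satisfying
`IsTriangulatedSubcat`. -/
def IsTriangulatedSubcat.toSubcategory {S : Set C} (hS : IsTriangulatedSubcat S) :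
    ObjectProperty C :=
  fun a => a ∈ S

lemma IsTriangulatedSubcat.inter {X Y : Set C} (hX : IsTriangulatedSubcat X)
    (hY : IsTriangulatedSubcat Y) : IsTriangulatedSubcat (X ∩ Y) where
  zero_mem := ⟨hX.zero_mem, hY.zero_mem⟩
  mem_of_iso := fun e h => ⟨hX.mem_of_iso e h.1, hY.mem_of_iso e h.2⟩
  shift_mem := fun h => ⟨hX.shift_mem h.1, hY.shift_mem h.2⟩
  unshift_mem := fun h => ⟨hX.unshift_mem h.1, hY.unshift_mem h.2⟩
  ext₂ := fun f g h hT ha hb => ⟨hX.ext₂ f g h hT ha.1 hb.1, hY.ext₂ f g h hT ha.2 hb.2⟩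

/-- The Verdier quotient of `C` by the triangulated subcategory `S`. -/
abbrev VerdierQuotient {S : Set C} (hS : IsTriangulatedSubcat S) : Type _ :=
  hS.toSubcategory.trW.Localization

/-- The Verdier quotient functor. -/
noncomputable abbrev Vq {S : Set C} (hS : IsTriangulatedSubcat S) : C ⥤ VerdierQuotient hS :=
  hS.toSubcategory.trW.Q

/-- The essential image of a class of objects under a functor (the closure under
isomorphisms of the image). -/
def QSet {D : Type*} [Category D] (L : C ⥤ D) (S : Set C) : Set D :=
  {d | ∃ s ∈ S, Nonempty (L.obj s ≅ d)}

/-- The right perpendicular class `X^⊥`. -/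
def rightPerp (X : Set C) : Set C := {t | ∀ {x : C}, x ∈ X → ∀ f : x ⟶ t, f = 0}

/-- The left perpendicular class `^⊥X`. -/
def leftPerp (X : Set C) : Set C := {t | ∀ {x : C}, x ∈ X → ∀ f : t ⟶ x, f = 0}

/-!
The octahedral axiom makes `star` associative (Mathlib's `extensionProduct_assoc`), and
`star S S ⊆ S` for a triangulated `S`. So if `Y * X ⊆ X * Y`, then
`(X * Y) * (X * Y) = X * (Y * X) * Y ⊆ X * (X * Y) * Y = (X * X) * (Y * Y) ⊆ X * Y`.
Conversely `X` and `Y` lie in `X * Y`, hence `Y * X ⊆ (X * Y) * (X * Y) ⊆ X * Y`.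
-/

lemma mem_star_iff {X Y : Set C} {e : C} :
    e ∈ star X Y ↔ ObjectProperty.extensionProduct (· ∈ X) (· ∈ Y) e := by
  constructor
  · rintro ⟨x, y, hx, hy, f, g, h, hT⟩
    exact ⟨x, y, f, g, h, hT, hx, hy⟩
  · rintro ⟨x, y, f, g, h, hT, hx, hy⟩
    exact ⟨x, y, hx, hy, f, g, h, hT⟩

lemma star_mono {X X' Y Y' : Set C} (hX : X ⊆ X') (hY : Y ⊆ Y') : star X Y ⊆ star X' Y' := by
  rintro e ⟨x, y, hx, hy, f, g, h, hT⟩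
  exact ⟨x, y, hX hx, hY hy, f, g, h, hT⟩

lemma subset_star_left {X Y : Set C} (hY : (0 : C) ∈ Y) : X ⊆ star X Y :=
  fun x hx => ⟨x, 0, hx, hY, 𝟙 x, 0, 0, contractible_distinguished x⟩

lemma subset_star_right {X Y : Set C} (hX : (0 : C) ∈ X) : Y ⊆ star X Y :=
  fun y hy => ⟨0, y, hX, hy, 0, 𝟙 y, 0, contractible_distinguished₁ y⟩

lemma IsTriangulatedSubcat.star_self_subset {S : Set C} (hS : IsTriangulatedSubcat S) :
    star S S ⊆ S := by
  rintro e ⟨a, b, ha, hb, f, g, h, hT⟩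
  exact hS.ext₂ f g h hT ha hb

lemma star_mem_of_iso {X Y : Set C} {a b : C} (i : a ≅ b) (ha : a ∈ star X Y) :
    b ∈ star X Y := by
  rw [mem_star_iff] at ha ⊢
  exact ObjectProperty.prop_of_iso _ i ha

lemma star_shift_mem {X Y : Set C} (hX : IsTriangulatedSubcat X) (hY : IsTriangulatedSubcat Y)
    {e : C} (he : e ∈ star X Y) (n : ℤ) : e⟦n⟧ ∈ star X Y := by
  obtain ⟨x, y, hx, hy, f, g, h, hT⟩ := he
  exact ⟨x⟦n⟧, y⟦n⟧, hX.shift_all x n hx, hY.shift_all y n hy, _, _, _,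
    Triangle.shift_distinguished _ hT n⟩

lemma isTriangulatedSubcat_star_of_star_self_subset {X Y : Set C}
    (hX : IsTriangulatedSubcat X) (hY : IsTriangulatedSubcat Y)
    (h : star (star X Y) (star X Y) ⊆ star X Y) :
    IsTriangulatedSubcat (star X Y) where
  zero_mem := subset_star_left hY.zero_mem hX.zero_mem
  mem_of_iso := star_mem_of_iso
  shift_mem ha := star_shift_mem hX hY ha 1
  unshift_mem ha := star_shift_mem hX hY ha (-1)
  ext₂ f g k hT ha hb := h ⟨_, _, ha, hb, f, g, k, hT⟩

variable [IsTriangulated C]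

lemma star_assoc (X Y Z : Set C) : star (star X Y) Z = star X (star Y Z) := by
  ext e
  simp only [mem_star_iff]
  exact Iff.of_eq (congrFun (ObjectProperty.extensionProduct_assoc (· ∈ X) (· ∈ Y) (· ∈ Z)) e)

lemma star_star_self_subset_of_swap {X Y : Set C} (hX : IsTriangulatedSubcat X)
    (hY : IsTriangulatedSubcat Y) (hYX : star Y X ⊆ star X Y) :
    star (star X Y) (star X Y) ⊆ star X Y :=
  calc star (star X Y) (star X Y) = star X (star (star Y X) Y) := by
        rw [star_assoc X Y, star_assoc Y X Y]
    _ ⊆ star X (star (star X Y) Y) := star_mono subset_rfl (star_mono hYX subset_rfl)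
    _ = star (star X X) (star Y Y) := by rw [star_assoc X X, star_assoc X Y Y]
    _ ⊆ star X Y := star_mono hX.star_self_subset hY.star_self_subset

/-- **Theorem A.** Let `X`, `Y` be triangulated subcategories of the triangulated
category `C`.  Then `X * Y` is a triangulated subcategory of `C` if and only if
`Y * X ⊆ X * Y`. -/
theorem statement0 {X Y : Set C} (hX : IsTriangulatedSubcat X) (hY : IsTriangulatedSubcat Y) :
    IsTriangulatedSubcat (star X Y) ↔ star Y X ⊆ star X Y := by
  constructor
  · intro hS
    calc star Y X ⊆ star (star X Y) (star X Y) :=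
          star_mono (subset_star_right hX.zero_mem) (subset_star_left hY.zero_mem)
      _ ⊆ star X Y := hS.star_self_subset
  · intro hYX
    exact isTriangulatedSubcat_star_of_star_self_subset hX hY
      (star_star_self_subset_of_swap hX hY hYX)

end Paper
end

section
/- Let T be a triangulated category with small Hom sets and let (X, Y) and (Y, Z) be stable t-structures in T with Z * X = T. Then the Verdier quotient T/(X ∩ Z) has small Hom sets: for all objects t, t' of T, the class of morphisms Hom_{T/(X ∩ Z)}(Q(t), Q(t')) is a small set, where Q : T → T/(X ∩ Z) is the quotient functor. -/
namespace Paper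

open CategoryTheory Limits Triangulated Pretriangulated ZeroObject

universe w v u

variable {C : Type u} [Category.{v} C] [HasZeroObject C] [Preadditive C] [HasShift C ℤ]
  [∀ n : ℤ, (shiftFunctor C n).Additive] [Pretriangulated C]

/-!
Write `S = X ∩ Z` and `Q` for the quotient functor. As `Y` is right orthogonal to `X` and left
orthogonal to `Z`, it lies in both orthogonals of `S`, so `Q` is bijective on `Hom(t, y)` and
on `Hom(y, t)` for `y ∈ Y`. Morphisms `Q z ⟶ Q x` with `z ∈ Z` and `x ∈ X` vanish: such a
morphism is a right fraction `z ← c → x` with `c ∈ Z`, and `Z * X = C` together with the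
octahedral axiom factors every morphism `c ⟶ x` through an object of `X ∩ Z`.

Hom sets into (or out of) the middle term of a distinguished triangle are small as soon as those
for the outer terms are (exactness of the Hom sequence). The `(Y, Z)`-triangle `y → t → z` thus
makes `Hom(Q t, Q x)` small for `x ∈ X`, and then the `(X, Y)`-triangle `x → t' → y` makes
`Hom(Q t, Q t')` small.
-/

lemma small_of_ker_le_range {A B E : Type*} [AddGroup A] [AddGroup B] [AddGroup E]
    (f : A →+ B) (g : B →+ E) (hfg : g.ker ≤ f.range) [Small.{w} A] [Small.{w} E] :
    Small.{w} B := by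
  have : Small.{w} (f.range : Set B) := by rw [AddMonoidHom.coe_range]; infer_instance
  have : Small.{w} g.ker := small_subset (s := (f.range : Set B)) hfg
  have : Small.{w} (B ⧸ g.ker) := small_of_injective (QuotientAddGroup.kerLift_injective g)
  exact small_of_injective
    (AddSubgroup.addGroupEquivQuotientProdAddSubgroup (s := g.ker)).injective

section

variable {D : Type*} [Category D] [HasZeroObject D] [Preadditive D] [HasShift D ℤ]
  [∀ n : ℤ, (shiftFunctor D n).Additive] [Pretriangulated D]
  (T : Triangle D) (hT : T ∈ distTriang D) (m : D)

include hT

lemma small_hom_to_obj₂ (h₁ : Small.{w} (m ⟶ T.obj₁)) (h₃ : Small.{w} (m ⟶ T.obj₃)) :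
    Small.{w} (m ⟶ T.obj₂) :=
  have := h₁; have := h₃
  small_of_ker_le_range (Preadditive.rightComp m T.mor₁) (Preadditive.rightComp m T.mor₂)
    fun β hβ => Triangle.coyoneda_exact₂ T hT β hβ |>.imp fun _ h => h.symm

lemma small_hom_from_obj₂ (h₁ : Small.{w} (T.obj₁ ⟶ m))
    (h₃ : Small.{w} (T.obj₃ ⟶ m)) :
    Small.{w} (T.obj₂ ⟶ m) :=
  have := h₁; have := h₃
  small_of_ker_le_range (Preadditive.leftComp m T.mor₂) (Preadditive.leftComp m T.mor₁)
    fun β hβ => Triangle.yoneda_exact₂ T hT β hβ |>.imp fun _ h => h.symm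

end

instance IsTriangulatedSubcat.toSubcategory_isTriangulated {S : Set C}
    (hS : IsTriangulatedSubcat S) : hS.toSubcategory.IsTriangulated where
  exists_zero := ⟨0, isZero_zero C, hS.zero_mem⟩
  isStableUnderShiftBy n := ⟨fun a ha => hS.shift_all a n ha⟩
  ext₂' T hT h₁ h₃ :=
    ObjectProperty.le_isoClosure _ _ (hS.ext₂ T.mor₁ T.mor₂ T.mor₃ hT h₁ h₃)

namespace IsTriangulatedSubcat

variable [IsTriangulated C] {S : Set C} (hS : IsTriangulatedSubcat S)

lemma mapTriangle_Vq_distinguished {T : Triangle C} (hT : T ∈ distTriang C) :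
    (Vq hS).mapTriangle.obj T ∈ distTriang (VerdierQuotient hS) :=
  ⟨T, Iso.refl _, hT⟩

lemma isZero_Vq_obj {a : C} (ha : a ∈ S) : IsZero ((Vq hS).obj a) :=
  have : IsIso ((Vq hS).map (0 : 0 ⟶ a)) := Localization.inverts _ hS.toSubcategory.trW _
    (ObjectProperty.trW.mk _ (contractible_distinguished₁ a) ha)
  ((Vq hS).map_isZero (isZero_zero C)).of_iso (asIso ((Vq hS).map (0 : 0 ⟶ a))).symm

lemma small_Vq_hom_of_mem_rightPerp (t : C) {y : C} (hy : y ∈ rightPerp S) :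
    Small.{v} ((Vq hS).obj t ⟶ (Vq hS).obj y) :=
  small_of_surjective (ObjectProperty.rightOrthogonal.map_bijective_of_isTriangulated
    (P := hS.toSubcategory) (fun _ f ha => hy ha f) (Vq hS) t).surjective

lemma small_Vq_hom_of_mem_leftPerp {y : C} (hy : y ∈ leftPerp S) (t : C) :
    Small.{v} ((Vq hS).obj y ⟶ (Vq hS).obj t) :=
  small_of_surjective (ObjectProperty.leftOrthogonal.map_bijective_of_isTriangulated
    (P := hS.toSubcategory) (fun _ f ha => hy ha f) (Vq hS) t).surjective

end IsTriangulatedSubcat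

lemma IsTriangulatedSubcat.mem_of_trW_of_mem {S Z : Set C} (hS : IsTriangulatedSubcat S)
    (hZ : IsTriangulatedSubcat Z) (hSZ : S ⊆ Z) {c z : C} {s : c ⟶ z}
    (hs : hS.toSubcategory.trW s) (hz : z ∈ Z) : c ∈ Z := by
  obtain ⟨u, g, h, hT, hu⟩ := hs
  exact hZ.ext₂ _ _ _ (inv_rot_of_distTriang _ hT) (hZ.shift_all u (-1) (hSZ hu)) hz

section

variable [IsTriangulated C] {X Y Z : Set C}

lemma exists_fac_through_inter_of_star_eq_univ (hX : IsTriangulatedSubcat X)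
    (hZ : IsTriangulatedSubcat Z) (hZX : star Z X = Set.univ) {z x : C} (hz : z ∈ Z)
    (hx : x ∈ X) (f : z ⟶ x) :
    ∃ m ∈ X ∩ Z, ∃ (g : z ⟶ m) (h : m ⟶ x), g ≫ h = f := by
  obtain ⟨w, g', h', hT⟩ := distinguished_cocone_triangle₁ f
  obtain ⟨zw, xw, hzw, hxw, a, b, e, hTw⟩ := Set.eq_univ_iff_forall.mp hZX w
  obtain ⟨m, r, s, hTm⟩ := distinguished_cocone_triangle (a ≫ g')
  -- `m` lies in `xw * x` by the octahedron and in `z * zw⟦1⟧` by rotating `hTm`.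
  have H := Triangulated.someOctahedron rfl hTw hT hTm
  exact ⟨m, ⟨hX.ext₂ H.m₁ H.m₃ _ H.mem hxw hx,
    hZ.ext₂ _ _ _ (rot_of_distTriang _ hTm) hz (hZ.shift_mem hzw)⟩, r, H.m₃, H.comm₃⟩

lemma Vq_hom_eq_zero_of_star_eq_univ (hX : IsTriangulatedSubcat X)
    (hZ : IsTriangulatedSubcat Z) (hZX : star Z X = Set.univ) {z x : C} (hz : z ∈ Z)
    (hx : x ∈ X) (φ : (Vq (hX.inter hZ)).obj z ⟶ (Vq (hX.inter hZ)).obj x) : φ = 0 := by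
  have hS := hX.inter hZ
  obtain ⟨ζ, rfl⟩ := Localization.exists_rightFraction (Vq hS) hS.toSubcategory.trW φ
  have : IsIso ((Vq hS).map ζ.s) := Localization.inverts _ hS.toSubcategory.trW _ ζ.hs
  obtain ⟨m, hm, g, h, hgh⟩ := exists_fac_through_inter_of_star_eq_univ hX hZ hZX
    (hS.mem_of_trW_of_mem hZ Set.inter_subset_right ζ.hs hz) hx ζ.f
  rw [← cancel_epi ((Vq hS).map ζ.s), MorphismProperty.RightFraction.map_s_comp_map, comp_zero,
    ← hgh, Functor.map_comp, (hS.isZero_Vq_obj hm).eq_of_tgt ((Vq hS).map g) 0, zero_comp]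

lemma small_Vq_hom_to_mem_left (hXY : IsStableTStructureIn Set.univ X Y)
    (hYZ : IsStableTStructureIn Set.univ Y Z) (hZX : star Z X = Set.univ) (t : C) {x : C}
    (hx : x ∈ X) :
    Small.{v} ((Vq (hXY.triU.inter hYZ.triV)).obj t ⟶ (Vq (hXY.triU.inter hYZ.triV)).obj x) := by
  have hS := hXY.triU.inter hYZ.triV
  obtain ⟨y, z, hy, hz, f, g, h, hT⟩ := Set.eq_univ_iff_forall.mp hYZ.star_eq t
  have hzx : Small.{v} ((Vq hS).obj z ⟶ (Vq hS).obj x) :=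
    @small_subsingleton _ ⟨fun φ ψ => by
      rw [Vq_hom_eq_zero_of_star_eq_univ hXY.triU hYZ.triV hZX hz hx φ,
        Vq_hom_eq_zero_of_star_eq_univ hXY.triU hYZ.triV hZX hz hx ψ]⟩
  exact small_hom_from_obj₂ _ (hS.mapTriangle_Vq_distinguished hT) _
    (hS.small_Vq_hom_of_mem_leftPerp (fun hu f => hYZ.hom_zero hy hu.2 f) x) hzx

end

variable [IsTriangulated C]

/-- Let `(X, Y)` and `(Y, Z)` be stable t-structures in `C` with `Z * X = C`.  Then the
Verdier quotient `C/(X ∩ Z)` has small `Hom` sets: for all `t, t'` in `C`, the class of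
morphisms `Q(t) ⟶ Q(t')` is `v`-small, where `v` is the universe of the `Hom` sets
of `C`. -/
theorem statement8 {X Y Z : Set C} (hXY : IsStableTStructureIn Set.univ X Y)
    (hYZ : IsStableTStructureIn Set.univ Y Z) (hZX : star Z X = Set.univ) :
    ∀ t t' : C,
      Small.{v} ((Vq (hXY.triU.inter hYZ.triV)).obj t ⟶ (Vq (hXY.triU.inter hYZ.triV)).obj t') := by
  intro t t'
  have hS := hXY.triU.inter hYZ.triV
  obtain ⟨x, y, hx, hy, f, g, h, hT⟩ := Set.eq_univ_iff_forall.mp hXY.star_eq t'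
  exact small_hom_to_obj₂ _ (hS.mapTriangle_Vq_distinguished hT) _
    (small_Vq_hom_to_mem_left hXY hYZ hZX t hx)
    (hS.small_Vq_hom_of_mem_rightPerp t fun hu f => hXY.hom_zero hu.1 hy f)

end Paper
end

section
/- Let T be a triangulated category and let X and Y be triangulated subcategories of T. If Hom_T(x, y) = 0 for all x ∈ X and y ∈ Y, then the subcategory of extensions X * Y is a triangulated subcategory of T. -/
namespace Paper

open CategoryTheory Limits Triangulated Pretriangulated ZeroObject

universe w v u

variable {C : Type u} [Category.{v} C] [HasZeroObject C] [Preadditive C] [HasShift C ℤ]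
  [∀ n : ℤ, (shiftFunctor C n).Additive] [Pretriangulated C]

/-!
A triangle `y ⟶ m ⟶ x ⟶ y⟦1⟧` with `x ∈ X`, `y ∈ Y` splits, because `y⟦1⟧ ∈ Y` and
`Hom(X, Y) = 0` kill its third map; hence `Y * X ⊆ X * Y`. With the associativity of `*`
(octahedron axiom) and `X * X ⊆ X`, `Y * Y ⊆ Y` this gives
`(X * Y) * (X * Y) = X * (Y * X) * Y ⊆ X * (X * Y) * Y = (X * X) * (Y * Y) ⊆ X * Y`.
-/

open ObjectProperty

lemma isTriangulatedSubcat_iff {S : Set C} : IsTriangulatedSubcat S ↔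
    ObjectProperty.IsTriangulated (· ∈ S) ∧ IsClosedUnderIsomorphisms (· ∈ S) := by
  refine ⟨fun hS => ?_, fun ⟨_, _⟩ => ?_⟩
  · have : IsClosedUnderIsomorphisms (· ∈ S) := ⟨hS.mem_of_iso⟩
    exact ⟨{ exists_zero := ⟨0, isZero_zero C, hS.zero_mem⟩
             isStableUnderShiftBy := fun n => ⟨fun a => hS.shift_all a n⟩
             toIsTriangulatedClosed₂ := .mk' fun T hT => hS.ext₂ T.mor₁ T.mor₂ T.mor₃ hT }, this⟩
  · exact { zero_mem := prop_zero _
            mem_of_iso := prop_of_iso _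
            shift_mem := le_shift _ 1 _
            unshift_mem := le_shift _ (-1) _
            ext₂ := fun _ _ _ hT => ext_of_isTriangulatedClosed₂ _ _ hT }

lemma star_eq_extensionProduct (X Y : Set C) :
    (· ∈ star X Y) = extensionProduct (· ∈ X) (· ∈ Y) := by
  ext e
  exact ⟨fun ⟨x, y, hx, hy, f, g, h, hT⟩ => ⟨x, y, f, g, h, hT, hx, hy⟩,
    fun ⟨x, y, f, g, h, hT, hx, hy⟩ => ⟨x, y, hx, hy, f, g, h, hT⟩⟩

lemma extensionProduct_swap_le {P Q : ObjectProperty C} [Q.IsStableUnderShiftBy (1 : ℤ)]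
    (hPQ : P ≤ Q.leftOrthogonal) : extensionProduct Q P ≤ extensionProduct P Q := by
  rintro m ⟨y, x, f, g, h, hT, hy, hx⟩
  have h_zero : h = 0 := hPQ x hx h (Q.le_shift 1 y hy)
  obtain ⟨e, -, -⟩ := exists_iso_binaryBiproduct_of_distTriang _ hT h_zero
  exact (extensionProduct P Q).prop_of_iso ((biprod.braiding x y).trans e.symm)
    ⟨x, y, _, _, _, binaryBiproductTriangle_distinguished x y, hx, hy⟩

variable [IsTriangulated C]

lemma extensionProduct_extensionProduct_le {P Q : ObjectProperty C} [P.IsTriangulatedClosed₂]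
    [P.IsClosedUnderIsomorphisms] [Q.IsTriangulatedClosed₂] [Q.IsClosedUnderIsomorphisms]
    [Q.IsStableUnderShiftBy (1 : ℤ)] (hPQ : P ≤ Q.leftOrthogonal) :
    extensionProduct (extensionProduct P Q) (extensionProduct P Q) ≤ extensionProduct P Q :=
  calc extensionProduct (extensionProduct P Q) (extensionProduct P Q)
      = extensionProduct P (extensionProduct (extensionProduct Q P) Q) := by
        simp only [extensionProduct_assoc]
    _ ≤ extensionProduct P (extensionProduct (extensionProduct P Q) Q) :=
        monotone_extensionProduct_right _ <|
          monotone_extensionProduct_left _ (extensionProduct_swap_le hPQ)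
    _ = extensionProduct (extensionProduct P P) (extensionProduct Q Q) := by
        simp only [extensionProduct_assoc]
    _ ≤ extensionProduct P Q :=
        (monotone_extensionProduct_left _
            (extensionProduct_le_of_isTriangulatedClosed₂ le_rfl le_rfl)).trans
          (monotone_extensionProduct_right _
            (extensionProduct_le_of_isTriangulatedClosed₂ le_rfl le_rfl))

lemma isTriangulated_extensionProduct {P Q : ObjectProperty C} [P.IsTriangulated]
    [P.IsClosedUnderIsomorphisms] [Q.IsTriangulated] [Q.IsClosedUnderIsomorphisms]
    (hPQ : P ≤ Q.leftOrthogonal) : (extensionProduct P Q).IsTriangulated where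
  exists_zero := ⟨0, isZero_zero C, le_extensionProduct_left Q 0 P.prop_zero⟩
  toIsTriangulatedClosed₂ := .mk' fun _ hT h₁ h₃ =>
    extensionProduct_extensionProduct_le hPQ _ ⟨_, _, _, _, _, hT, h₁, h₃⟩

/-- If `X`, `Y` are triangulated subcategories of `C` with `Hom(X, Y) = 0`, then `X * Y`
is a triangulated subcategory of `C`. -/
theorem statement9 {X Y : Set C} (hX : IsTriangulatedSubcat X) (hY : IsTriangulatedSubcat Y)
    (hzero : ∀ {x y : C}, x ∈ X → y ∈ Y → ∀ f : x ⟶ y, f = 0) :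
    IsTriangulatedSubcat (star X Y) := by
  obtain ⟨_, _⟩ := isTriangulatedSubcat_iff.mp hX
  obtain ⟨_, _⟩ := isTriangulatedSubcat_iff.mp hY
  rw [isTriangulatedSubcat_iff, star_eq_extensionProduct]
  exact ⟨isTriangulated_extensionProduct fun x hx y f hy => hzero hx hy f, inferInstance⟩

end Paper
end
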